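/- arXiv:1908.00613 — 2 statements merged into one kernel-verified Lean document; each statement's English description precedes it below -/
import Mathlib

section
/- If G is a permutation group on n letters and the total number of set-orbits s(G) = n + r with r even, then n is even. -/
/-!
Complementation commutes with the action of `G`, so it induces an involution on the set-orbits.
If this involution fixes an orbit, that orbit contains a set `X` together with `Xᶜ`, whence
`|X| = |Xᶜ|` and `n = 2|X|`. Otherwise it pairs off the orbits, so `s(G) = n + r` is even, and
so is `n`.
-/

open Pointwise

/-- The number of orbits of `G ≤ Sₙ` on the powerset of `{1,...,n}`. -/
noncomputable def setOrbitCount (n : ℕ) (G : Subgroup (Equiv.Perm (Fin n))) : ℕ :=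
  Nat.card (Quotient (MulAction.orbitRel G (Finset (Fin n))))

/-- The common cardinality of the sets in an orbit. -/
noncomputable def orbitCard (n : ℕ) (G : Subgroup (Equiv.Perm (Fin n))) :
    Quotient (MulAction.orbitRel G (Finset (Fin n))) → ℕ :=
  Quotient.lift Finset.card (by
    rintro X Y ⟨g, rfl⟩
    exact Finset.card_smul_finset g Y)

/-- `s_t(G)`: the number of orbits of `G` on the `t`-element subsets of `{1,...,n}`. -/
noncomputable def tSetOrbitCount (n : ℕ) (G : Subgroup (Equiv.Perm (Fin n))) (t : ℕ) : ℕ :=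
  Nat.card {q : Quotient (MulAction.orbitRel G (Finset (Fin n))) // orbitCard n G q = t}

open Function MulAction

theorem Finset.smul_finset_compl {G α : Type*} [Group G] [MulAction G α] [Fintype α]
    [DecidableEq α] (g : G) (s : Finset α) : g • sᶜ = (g • s)ᶜ := by
  simp only [compl_eq_univ_sdiff, smul_finset_sdiff, smul_finset_univ]

theorem Function.Involutive.even_natCard_of_forall_ne {α : Type*} [Finite α] {f : α → α}
    (hf : Involutive f) (hfix : ∀ x, f x ≠ x) : Even (Nat.card α) := by
  classical
  cases nonempty_fintype α
  have hsupp : hf.toPerm.support = Finset.univ := by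
    ext x
    simp [hfix x]
  rw [Nat.card_eq_fintype_card, even_iff_two_dvd, ← Finset.card_univ, ← hsupp]
  exact Equiv.Perm.two_dvd_card_support (Equiv.ext fun x => by simp [sq, hf x])

section OrbitCompl

variable {G α : Type*} [Group G] [MulAction G α] [Fintype α] [DecidableEq α]

variable (G α) in
def orbitCompl : Quotient (orbitRel G (Finset α)) → Quotient (orbitRel G (Finset α)) :=
  Quotient.map compl (by
    rintro _ s ⟨g, rfl⟩
    exact ⟨g, Finset.smul_finset_compl g s⟩)

theorem orbitCompl_involutive : Involutive (orbitCompl G α) := by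
  rintro ⟨s⟩
  exact congrArg _ (compl_compl s)

theorem even_card_of_orbitCompl_eq {q : Quotient (orbitRel G (Finset α))}
    (hq : orbitCompl G α q = q) : Even (Fintype.card α) := by
  induction q using Quotient.inductionOn with
  | h s =>
    obtain ⟨g, hg⟩ : sᶜ ∈ orbit G s := Quotient.exact hq
    have hcard : sᶜ.card = s.card := by rw [← hg, Finset.card_smul_finset]
    exact ⟨s.card, by rw [← s.card_add_card_compl, hcard]⟩

theorem even_card_or_even_natCard_orbitRel_finset :
    Even (Fintype.card α) ∨ Even (Nat.card (Quotient (orbitRel G (Finset α)))) := by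
  by_cases hfix : ∃ q, orbitCompl G α q = q
  · obtain ⟨q, hq⟩ := hfix
    exact .inl (even_card_of_orbitCompl_eq hq)
  · push Not at hfix
    exact .inr (orbitCompl_involutive.even_natCard_of_forall_ne hfix)

end OrbitCompl

theorem stmt_1 (n r : ℕ) (G : Subgroup (Equiv.Perm (Fin n)))
    (hr : Even r) (h : setOrbitCount n G = n + r) : Even n := by
  rcases even_card_or_even_natCard_orbitRel_finset (G := G) (α := Fin n) with hn | hs
  · simpa using hn
  · change Even (setOrbitCount n G) at hs
    rw [h, Nat.even_add] at hs
    exact hs.mpr hr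
end

section
/- For any permutation group G on n letters and any integer 1 ≤ t ≤ n/2, the number of orbits on (t−1)-element subsets is at most the number of orbits on t-element subsets: s_{t−1}(G) ≤ s_t(G). -/
open Pointwise

/-!
On functions from subsets of `{1,…,n}` to `ℚ`, consider the up operator
`(U f)(Z) = ∑_{x ∈ Z} f(Z ∖ x)` and its adjoint, the down operator `(D f)(Y) = ∑_{x ∉ Y} f(Y ∪ x)`.
They satisfy `((DU − UD) f)(Y) = (n − 2|Y|) f(Y)`, so for `f` supported on
`k`-sets `‖U f‖² = ‖D f‖² + (n − 2k)‖f‖²`, and `U` is injective there when `2k < n`. Since `U`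
commutes with the action of `G`, it maps `G`-invariant functions on `k`-sets (a space of dimension
`s_k(G)`) injectively to `G`-invariant functions on `(k+1)`-sets (dimension `s_{k+1}(G)`).
-/

open Finset

namespace UpDown

variable {α 𝕜 : Type*} [DecidableEq α]

section CommRing

variable [CommRing 𝕜]

def up (f : Finset α → 𝕜) (Z : Finset α) : 𝕜 := ∑ x ∈ Z, f (Z.erase x)

theorem up_eq_zero_of_card_ne {k : ℕ} {f : Finset α → 𝕜} (hf : ∀ X, #X ≠ k → f X = 0)
    {Z : Finset α} (hZ : #Z ≠ k + 1) : up f Z = 0 :=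
  sum_eq_zero fun x hx => hf _ <| by
    have := card_pos.mpr ⟨x, hx⟩
    rw [card_erase_of_mem hx]; omega

theorem up_smul {G : Type*} [Group G] [MulAction G α] {f : Finset α → 𝕜}
    (hf : ∀ (g : G) X, f (g • X) = f X) (g : G) (Z : Finset α) : up f (g • Z) = up f Z := by
  rw [up, smul_finset_def, sum_image (MulAction.injective g).injOn]
  refine sum_congr rfl fun x _ => ?_
  rw [← image_erase (MulAction.injective g), ← smul_finset_def, hf]

variable [Fintype α]

def down (f : Finset α → 𝕜) (Y : Finset α) : 𝕜 := ∑ x ∈ Yᶜ, f (insert x Y)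

theorem sum_up_mul (f g : Finset α → 𝕜) : ∑ Z, up f Z * g Z = ∑ Y, f Y * down g Y := by
  simp only [up, down, sum_mul, mul_sum, sum_sigma']
  refine sum_nbij' (fun p => ⟨p.1.erase p.2, p.2⟩) (fun p => ⟨insert p.2 p.1, p.2⟩)
    ?_ ?_ ?_ ?_ ?_ <;> rintro ⟨Z, x⟩ h <;> simp_all [insert_erase]

theorem down_up (f : Finset α → 𝕜) (Y : Finset α) :
    down (up f) Y = up (down f) Y + (Fintype.card α - 2 * #Y : 𝕜) * f Y := by
  set swap := ∑ x ∈ Yᶜ, ∑ y ∈ Y, f (insert x (Y.erase y))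
  have hdu : down (up f) Y = #Yᶜ * f Y + swap := by
    have (x) (hx : x ∈ Yᶜ) : up f (insert x Y) = f Y + ∑ y ∈ Y, f (insert x (Y.erase y)) := by
      rw [mem_compl] at hx
      rw [up, sum_insert hx, erase_insert hx]
      congr 1
      refine sum_congr rfl fun y hy => ?_
      rw [erase_insert_of_ne (by rintro rfl; exact hx hy)]
    rw [down, sum_congr rfl this, sum_add_distrib, sum_const, nsmul_eq_mul]
  have hud : up (down f) Y = #Y * f Y + swap := by
    have (y) (hy : y ∈ Y) : down f (Y.erase y) = f Y + ∑ x ∈ Yᶜ, f (insert x (Y.erase y)) := by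
      have : (Y.erase y)ᶜ = insert y Yᶜ := by
        ext z; by_cases hz : z = y <;> simp [hz, hy]
      rw [down, this, sum_insert (by simp [hy]), insert_erase hy]
    rw [up, sum_congr rfl this, sum_add_distrib, sum_const, nsmul_eq_mul, sum_comm]
  rw [hdu, hud, card_compl, Nat.cast_sub (card_le_univ Y)]
  ring

theorem sum_up_sq {k : ℕ} {f : Finset α → 𝕜} (hf : ∀ X, #X ≠ k → f X = 0) :
    ∑ Z, up f Z ^ 2 = ∑ Y, down f Y ^ 2 + (Fintype.card α - 2 * k : 𝕜) * ∑ Y, f Y ^ 2 := by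
  have (Y : Finset α) :
      f Y * down (up f) Y = up (down f) Y * f Y + (Fintype.card α - 2 * k : 𝕜) * f Y ^ 2 := by
    rw [down_up]
    obtain hY | hY := eq_or_ne #Y k
    · rw [hY]; ring
    · rw [hf Y hY]; ring
  simp only [sq, sum_up_mul, this, sum_add_distrib, mul_sum]

end CommRing

variable [Fintype α] [Field 𝕜] [LinearOrder 𝕜] [IsStrictOrderedRing 𝕜]

theorem eq_zero_of_up_eq_zero {k : ℕ} (hk : 2 * k < Fintype.card α) {f : Finset α → 𝕜}
    (hf : ∀ X, #X ≠ k → f X = 0) (hup : up f = 0) : f = 0 := by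
  have hpos : (0 : 𝕜) < Fintype.card α - 2 * k := by
    rw [sub_pos]; exact_mod_cast hk
  have hsum : ∑ Y, f Y ^ 2 = 0 := by
    have : ∑ Z, up f Z ^ 2 = 0 := by simp [hup]
    rw [sum_up_sq hf] at this
    nlinarith [sum_nonneg fun Y (_ : Y ∈ univ) => sq_nonneg (down f Y),
      sum_nonneg fun Y (_ : Y ∈ univ) => sq_nonneg (f Y)]
  funext X
  exact pow_eq_zero_iff two_ne_zero |>.mp <|
    (sum_eq_zero_iff_of_nonneg fun Y _ => sq_nonneg (f Y)).mp hsum X (mem_univ X)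

end UpDown

section Orbits

variable {n : ℕ} (G : Subgroup (Equiv.Perm (Fin n))) {𝕜 : Type*}

abbrev OrbitsOfCard (k : ℕ) : Type :=
  {q : Quotient (MulAction.orbitRel G (Finset (Fin n))) // orbitCard n G q = k}

variable {G}

theorem apply_out_mk_of_invariant {β : Type*} {f : Finset (Fin n) → β}
    (hf : ∀ (g : G) X, f (g • X) = f X) (X : Finset (Fin n)) :
    f (Quotient.mk (MulAction.orbitRel G _) X).out = f X := by
  obtain ⟨g, hg⟩ := Quotient.mk_out (s := MulAction.orbitRel G _) X
  rw [← hg, hf]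

variable [Field 𝕜]

def extendOrbitFun {k : ℕ} (c : OrbitsOfCard G k → 𝕜) (X : Finset (Fin n)) : 𝕜 :=
  if h : #X = k then c ⟨Quotient.mk _ X, h⟩ else 0

theorem extendOrbitFun_smul {k : ℕ} (c : OrbitsOfCard G k → 𝕜) (g : G) (X : Finset (Fin n)) :
    extendOrbitFun c (g • X) = extendOrbitFun c X := by
  simp only [extendOrbitFun, card_smul_finset]
  split_ifs <;> simp [MulAction.orbitRel.Quotient.quotient_smul_eq]

theorem extendOrbitFun_of_card_ne {k : ℕ} (c : OrbitsOfCard G k → 𝕜) {X : Finset (Fin n)}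
    (hX : #X ≠ k) : extendOrbitFun c X = 0 :=
  dif_neg hX

variable (G 𝕜) in
noncomputable def upOnOrbits (k : ℕ) :
    (OrbitsOfCard G k → 𝕜) →ₗ[𝕜] (OrbitsOfCard G (k + 1) → 𝕜) where
  toFun c p := UpDown.up (extendOrbitFun c) p.1.out
  map_add' c c' := by
    funext p
    simp only [UpDown.up, extendOrbitFun, Pi.add_apply, ← sum_add_distrib]
    refine sum_congr rfl fun x _ => ?_
    split_ifs <;> simp
  map_smul' a c := by
    funext p
    simp only [UpDown.up, extendOrbitFun, Pi.smul_apply, smul_eq_mul, mul_sum, RingHom.id_apply]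
    refine sum_congr rfl fun x _ => ?_
    split_ifs <;> simp

variable [LinearOrder 𝕜] [IsStrictOrderedRing 𝕜]

theorem upOnOrbits_injective {k : ℕ} (hk : 2 * k < n) :
    Function.Injective (upOnOrbits G 𝕜 k) := by
  rw [← LinearMap.ker_eq_bot, LinearMap.ker_eq_bot']
  intro c hc
  have hsupp : ∀ X, #X ≠ k → extendOrbitFun c X = 0 := fun _ => extendOrbitFun_of_card_ne c
  have hup : UpDown.up (extendOrbitFun c) = 0 := by
    funext Z
    by_cases hZ : #Z = k + 1
    · rw [← apply_out_mk_of_invariant (UpDown.up_smul (extendOrbitFun_smul c))]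
      exact congrFun hc ⟨Quotient.mk _ Z, hZ⟩
    · exact UpDown.up_eq_zero_of_card_ne hsupp hZ
  have hzero := UpDown.eq_zero_of_up_eq_zero (by simpa using hk) hsupp hup
  funext ⟨q, hq⟩
  induction q using Quotient.inductionOn with | h X => ?_
  have := congrFun hzero X
  rwa [extendOrbitFun, dif_pos (show #X = k from hq)] at this

end Orbits

theorem tSetOrbitCount_le_succ {n k : ℕ} (hk : 2 * k < n) (G : Subgroup (Equiv.Perm (Fin n))) :
    tSetOrbitCount n G k ≤ tSetOrbitCount n G (k + 1) := by
  have := Fintype.ofFinite (OrbitsOfCard G k)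
  have := Fintype.ofFinite (OrbitsOfCard G (k + 1))
  simpa [tSetOrbitCount, Nat.card_eq_fintype_card, Module.finrank_pi] using
    LinearMap.finrank_le_finrank_of_injective (upOnOrbits_injective (𝕜 := ℚ) (G := G) hk)

theorem stmt_10 (n t : ℕ) (ht1 : 1 ≤ t) (ht2 : 2 * t ≤ n)
    (G : Subgroup (Equiv.Perm (Fin n))) :
    tSetOrbitCount n G (t - 1) ≤ tSetOrbitCount n G t := by
  obtain ⟨k, rfl⟩ := Nat.exists_eq_add_of_le' ht1
  exact tSetOrbitCount_le_succ (by omega) G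
end
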